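/- arXiv:0807.3207 — 7 statements merged into one kernel-verified Lean document; each statement's English description precedes it below -/
import Mathlib

section
/- Let c^1,...,c^m be strictly upper triangular N×N real matrices and let h be a positive-definite symmetric N×N matrix. Then for every ε>0 there exists an invertible N×N matrix J such that, with c̃^a = J c^a J^{-1}, the inequality Σ_{a=1}^m ⟨h c̃^a v_a, c̃^a v_a⟩ ≤ ε Σ_{a=1}^m ⟨h v_a, v_a⟩ holds for all vectors v_1,...,v_m ∈ ℝ^N, where ⟨h x, y⟩ = Σ_{A,B} h_{AB} x^A y^B. -/
/-!
Conjugating by `diag (1, t, …, t ^ (N - 1))` multiplies the `(A, B)` entry by `t ^ (A - B)`, so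
for a strictly upper triangular `c` the conjugates tend to `0` as `t → ∞` (the Liapunov trick).
On the other side, writing `h = Bᵀ B` with `B` invertible,
`⟨h M v, M v⟩ = ‖(B M B⁻¹) (B v)‖² ≤ ‖B M B⁻¹‖² ⟨h v, v⟩` in the `L²` operator norm, and `B M B⁻¹`
is small once `M` is close to `0`.
-/

open Matrix Filter Topology

theorem Matrix.diagonal_mul_mul_inv_diagonal_apply {n K : Type*} [Fintype n] [DecidableEq n]
    [Field K] {d : n → K} (hd : ∀ i, d i ≠ 0) (c : Matrix n n K) (i j : n) :
    (diagonal d * c * (diagonal d)⁻¹) i j = d i * c i j / d j := by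
  have hinv : (diagonal d)⁻¹ = diagonal d⁻¹ := inv_eq_right_inv <| by
    rw [diagonal_mul_diagonal, ← diagonal_one]
    exact congrArg diagonal (funext fun i ↦ mul_inv_cancel₀ (hd i))
  rw [hinv, mul_diagonal, diagonal_mul, div_eq_mul_inv, Pi.inv_apply]

noncomputable def scalingMatrix (N : ℕ) (t : ℝ) : Matrix (Fin N) (Fin N) ℝ :=
  diagonal fun A ↦ t ^ (A : ℕ)

theorem isUnit_scalingMatrix {N : ℕ} {t : ℝ} (ht : t ≠ 0) : IsUnit (scalingMatrix N t) :=
  isUnit_diagonal.2 <| Pi.isUnit_iff.2 fun _ ↦ (pow_ne_zero _ ht).isUnit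

theorem tendsto_scalingMatrix_conj_of_upperTriangular {N : ℕ}
    {c : Matrix (Fin N) (Fin N) ℝ} (hc : ∀ A B, B ≤ A → c A B = 0) :
    Tendsto (fun t ↦ scalingMatrix N t * c * (scalingMatrix N t)⁻¹) atTop (𝓝 0) := by
  refine tendsto_pi_nhds.2 fun A ↦ tendsto_pi_nhds.2 fun B ↦ ?_
  rcases le_or_gt B A with hBA | hAB
  · simp [scalingMatrix, inv_diagonal, mul_diagonal, diagonal_mul, hc A B hBA]
  · have hentry : ∀ᶠ t : ℝ in atTop, c A B * t⁻¹ ^ ((B : ℕ) - A) =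
        (scalingMatrix N t * c * (scalingMatrix N t)⁻¹) A B := by
      filter_upwards [eventually_gt_atTop 0] with t ht
      rw [scalingMatrix, diagonal_mul_mul_inv_diagonal_apply (fun _ ↦ (pow_pos ht _).ne'),
        pow_sub₀ _ (inv_ne_zero ht.ne') hAB.le, inv_pow, inv_pow, inv_inv, div_eq_mul_inv]
      ring
    have hdecay : Tendsto (fun t : ℝ ↦ c A B * t⁻¹ ^ ((B : ℕ) - A)) atTop (𝓝 0) := by
      simpa [zero_pow (Nat.sub_ne_zero_of_lt hAB)] using
        (tendsto_inv_atTop_zero.pow ((B : ℕ) - A)).const_mul (c A B)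
    simpa using hdecay.congr' hentry

theorem Matrix.transpose_mul_self_mulVec_dotProduct {m n : Type*} [Fintype m] [Fintype n]
    (B : Matrix m n ℝ) (v : n → ℝ) :
    (Bᵀ * B) *ᵥ v ⬝ᵥ v = ‖WithLp.toLp 2 (B *ᵥ v)‖ ^ 2 := by
  rw [← mulVec_mulVec, dotProduct_comm, dotProduct_mulVec, vecMul_transpose,
    EuclideanSpace.real_norm_sq_eq]
  simp [dotProduct, sq]

open scoped MatrixOrder in
theorem Matrix.PosDef.exists_isUnit_eq_transpose_mul_self {n : Type*} [Fintype n] [DecidableEq n]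
    {h : Matrix n n ℝ} (hh : h.PosDef) : ∃ B : Matrix n n ℝ, IsUnit B ∧ h = Bᵀ * B :=
  CStarAlgebra.isStrictlyPositive_iff_eq_star_mul_self.mp hh.isStrictlyPositive

open scoped Matrix.Norms.L2Operator in
theorem Matrix.PosDef.eventually_dotProduct_mulVec_le {n : Type*} [Fintype n] [DecidableEq n]
    {h : Matrix n n ℝ} (hh : h.PosDef) {ε : ℝ} (hε : 0 < ε) :
    ∀ᶠ M in 𝓝 (0 : Matrix n n ℝ), ∀ v, h *ᵥ (M *ᵥ v) ⬝ᵥ (M *ᵥ v) ≤ ε * (h *ᵥ v ⬝ᵥ v) := by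
  obtain ⟨B, hB, rfl⟩ := hh.exists_isUnit_eq_transpose_mul_self
  have hconj : Tendsto (fun M ↦ B * M * B⁻¹) (𝓝 0) (𝓝 0) := by
    simpa using ((continuous_const.matrix_mul continuous_id).matrix_mul continuous_const).tendsto
      (0 : Matrix n n ℝ)
  filter_upwards [(hconj.norm.pow 2).eventually_le_const (by simpa using hε)] with M hM v
  have hBMv : B *ᵥ (M *ᵥ v) = (B * M * B⁻¹) *ᵥ (B *ᵥ v) := by
    rw [mulVec_mulVec, mulVec_mulVec, mul_assoc (B * M),
      nonsing_inv_mul _ ((isUnit_iff_isUnit_det B).mp hB), mul_one]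
  rw [transpose_mul_self_mulVec_dotProduct, transpose_mul_self_mulVec_dotProduct, hBMv]
  have hop := l2_opNorm_mulVec (B * M * B⁻¹) (WithLp.toLp 2 (B *ᵥ v))
  calc ‖WithLp.toLp 2 ((B * M * B⁻¹) *ᵥ (B *ᵥ v))‖ ^ 2
      ≤ (‖B * M * B⁻¹‖ * ‖WithLp.toLp 2 (B *ᵥ v)‖) ^ 2 :=
        pow_le_pow_left₀ (norm_nonneg _) hop 2
    _ ≤ ε * ‖WithLp.toLp 2 (B *ᵥ v)‖ ^ 2 := by
        rw [mul_pow]; exact mul_le_mul_of_nonneg_right hM (sq_nonneg _)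

theorem stmt1_general (N m : ℕ)
    (c : Fin m → Matrix (Fin N) (Fin N) ℝ)
    (hupper : ∀ a (A B : Fin N), B ≤ A → c a A B = 0)
    (h : Matrix (Fin N) (Fin N) ℝ) (hpos : h.PosDef) :
    ∀ ε : ℝ, 0 < ε → ∃ J : Matrix (Fin N) (Fin N) ℝ, IsUnit J ∧
      ∀ v : Fin m → (Fin N → ℝ),
        ∑ a : Fin m, (h.mulVec ((J * c a * J⁻¹).mulVec (v a))) ⬝ᵥ
            ((J * c a * J⁻¹).mulVec (v a))
          ≤ ε * ∑ a : Fin m, (h.mulVec (v a)) ⬝ᵥ (v a) := by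
  intro ε hε
  have hsmall : ∀ a, ∀ᶠ t in atTop, ∀ w,
      h *ᵥ ((scalingMatrix N t * c a * (scalingMatrix N t)⁻¹) *ᵥ w) ⬝ᵥ
          ((scalingMatrix N t * c a * (scalingMatrix N t)⁻¹) *ᵥ w) ≤ ε * (h *ᵥ w ⬝ᵥ w) :=
    fun a ↦ tendsto_scalingMatrix_conj_of_upperTriangular (hupper a)
      (hpos.eventually_dotProduct_mulVec_le hε)
  obtain ⟨t, ht, hsmall⟩ := ((eventually_gt_atTop 0).and (eventually_all.2 hsmall)).exists
  refine ⟨scalingMatrix N t, isUnit_scalingMatrix ht.ne', fun v ↦ ?_⟩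
  rw [Finset.mul_sum]
  exact Finset.sum_le_sum fun a _ ↦ hsmall a (v a)

theorem stmt1 (N m : ℕ) (hN : 0 < N) (hm : 0 < m)
    (c : Fin m → Matrix (Fin N) (Fin N) ℝ)
    (hupper : ∀ a (A B : Fin N), B ≤ A → c a A B = 0)
    (h : Matrix (Fin N) (Fin N) ℝ) (hsymm : h.IsSymm) (hpos : h.PosDef) :
    ∀ ε : ℝ, 0 < ε → ∃ J : Matrix (Fin N) (Fin N) ℝ, IsUnit J ∧
      ∀ v : Fin m → (Fin N → ℝ),
        ∑ a : Fin m, (h.mulVec ((J * c a * J⁻¹).mulVec (v a))) ⬝ᵥ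
            ((J * c a * J⁻¹).mulVec (v a))
          ≤ ε * ∑ a : Fin m, (h.mulVec (v a)) ⬝ᵥ (v a) :=
  stmt1_general N m c hupper h hpos
end

section
/- Let V be a finite-dimensional real inner product space of dimension d+1 ≥ 2 with a Lorentzian bilinear form g of signature (-,+,...,+). Let n ∈ V be a future-directed unit timelike vector (g(n,n) = -1) and let u ∈ V be future-directed timelike (g(u,u) < 0, g(n,u) < 0). Define the symmetric bilinear form A_n(v,w) := -g(n,u) g(v,w) + g(n,v) g(u,w) + g(u,v) g(n,w). Then A_n is positive definite on V. -/
/-!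
Writing `h_e(x, y) = g(x, y) + g(e, x) g(e, y)` for a unit timelike `e`, `h_e(x, x)` is the value
of `g` on the projection of `x` to `e^⊥`, so `h_e` is positive semidefinite as soon as `g` is
positive definite on `e^⊥`, and then satisfies Cauchy–Schwarz. The basis makes `g` positive
definite on `(b 0)^⊥`, and Cauchy–Schwarz for `h_{b 0}` transfers this to `n^⊥` for every timelike
`n`. With `m = g(n, u)`, `β = g(n, v)`, `C = h_n(u, v)`, the form in question satisfies
`-m A_n(v, v) = (m β - C)^2 + m^2 h_n(v, v) - C^2`, and the last two terms are nonnegative because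
`h_n(u, u) = g(u, u) + m^2 < m^2`.
-/

namespace LinearMap.BilinForm

variable {V : Type*} [AddCommGroup V] [Module ℝ V] {g : LinearMap.BilinForm ℝ V}

def spatialForm (g : LinearMap.BilinForm ℝ V) (e : V) : LinearMap.BilinForm ℝ V :=
  g + linMulLin (g e) (g e)

@[simp]
theorem spatialForm_apply (e x y : V) : spatialForm g e x y = g x y + g e x * g e y := rfl

def PosDefOnOrthogonal (g : LinearMap.BilinForm ℝ V) (e : V) : Prop :=
  ∀ x, g e x = 0 → x ≠ 0 → 0 < g x x

theorem PosDefOnOrthogonal.apply_self_nonneg {e : V} (h : g.PosDefOnOrthogonal e) {x : V}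
    (hx : g e x = 0) : 0 ≤ g x x := by
  rcases eq_or_ne x 0 with rfl | hx0
  · simp
  · exact (h x hx hx0).le

theorem apply_eq_sum_repr_of_diagonal {ι : Type*} [Fintype ι] [DecidableEq ι]
    (b : Module.Basis ι ℝ V) (s : ι → ℝ) (hb : ∀ i j, g (b i) (b j) = if i = j then s i else 0)
    (x y : V) : g x y = ∑ i, s i * (b.repr x i * b.repr y i) := by
  conv_lhs => rw [← b.sum_repr x, ← b.sum_repr y]
  simp [map_sum, hb, mul_ite, -Module.Basis.sum_repr]
  exact Finset.sum_congr rfl fun i _ => by ring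

theorem posDefOnOrthogonal_basis {ι : Type*} [Fintype ι] [DecidableEq ι]
    (b : Module.Basis ι ℝ V) (i₀ : ι)
    (hb : ∀ i j, g (b i) (b j) = if i = j then (if i = i₀ then -1 else 1) else 0) :
    g.PosDefOnOrthogonal (b i₀) := by
  intro x hx hx0
  have hrepr := apply_eq_sum_repr_of_diagonal b _ hb
  have hx₀ : b.repr x i₀ = 0 := by simpa [hrepr, Finsupp.single_apply] using hx
  have hsq : g x x = ∑ i, b.repr x i ^ 2 := by
    rw [hrepr]
    refine Finset.sum_congr rfl fun i _ => ?_
    split_ifs with h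
    · simp [h, hx₀]
    · ring
  obtain ⟨i, hi⟩ : ∃ i, b.repr x i ≠ 0 := by
    by_contra! h
    exact hx0 (b.repr.map_eq_zero_iff.mp (Finsupp.ext h))
  rw [hsq]
  exact Finset.sum_pos' (fun j _ => sq_nonneg _) ⟨i, Finset.mem_univ i, by positivity⟩

section
variable (hg : ∀ x y, g x y = g y x) {e : V} (he : g e e = -1)
include hg he

theorem spatialForm_self_nonneg (h : g.PosDefOnOrthogonal e) (x : V) :
    0 ≤ spatialForm g e x x := by
  have horth : g e (x + g e x • e) = 0 := by simp [he]
  have hexp : g (x + g e x • e) (x + g e x • e) = spatialForm g e x x := by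
    simp [he, hg x e]
  exact hexp ▸ h.apply_self_nonneg horth

theorem spatialForm_apply_sq_le (h : g.PosDefOnOrthogonal e) (x y : V) :
    spatialForm g e x y ^ 2 ≤ spatialForm g e x x * spatialForm g e y y :=
  (spatialForm g e).apply_sq_le_of_symm (spatialForm_self_nonneg hg he h)
    ⟨fun x y => by simp [hg x y, mul_comm]⟩ x y

theorem PosDefOnOrthogonal.of_apply_self_neg (h : g.PosDefOnOrthogonal e) {n : V}
    (hn : g n n < 0) : g.PosDefOnOrthogonal n := by
  intro w hnw hw
  have hcs := spatialForm_apply_sq_le hg he h n w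
  have hW := spatialForm_self_nonneg hg he h w
  have hN := spatialForm_self_nonneg hg he h n
  simp only [spatialForm_apply, hnw, zero_add] at hcs hW hN
  rcases eq_or_ne (g e w) 0 with hew | hew
  · exact h w hew hw
  have hq : 0 < g e w ^ 2 := by positivity
  -- `h_e(n, w) = g(e, n) g(e, w)` because `n ⊥ w`; Cauchy–Schwarz for `h_e` gives
  have key : -g n n * (g w w + g e w * g e w) ≤ g e n ^ 2 * g w w := by nlinarith
  by_contra hle
  nlinarith

theorem PosDefOnOrthogonal.timelike_contraction_pos (h : g.PosDefOnOrthogonal e) {u : V}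
    (hu : g u u < 0) (heu : g e u < 0) (v : V) (hv : v ≠ 0) :
    0 < -(g e u) * g v v + g e v * g u v + g u v * g e v := by
  rcases eq_or_ne (g e v) 0 with hev | hev
  · rw [hev]
    nlinarith [h v hev hv]
  have hcs := spatialForm_apply_sq_le hg he h u v
  have hV := spatialForm_self_nonneg hg he h v
  simp only [spatialForm_apply] at hcs hV
  set m := g e u
  set β := g e v
  set C := g u v + m * β
  have hU : g u u + m * m < m ^ 2 := by nlinarith
  have hid : -m * (-m * g v v + β * g u v + g u v * β)
      = (m * β - C) ^ 2 + (m ^ 2 * (g v v + β * β) - C ^ 2) := by ring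
  have hrest : 0 ≤ m ^ 2 * (g v v + β * β) - C ^ 2 := by nlinarith
  refine pos_of_mul_pos_right (hid ▸ ?_) (by linarith : 0 ≤ -m)
  rcases hV.eq_or_lt with hV0 | hVpos
  · have hC : C = 0 := by nlinarith
    have : m * β ≠ 0 := mul_ne_zero heu.ne hev
    exact add_pos_of_pos_of_nonneg (by rw [hC, sub_zero]; positivity) hrest
  · nlinarith

end

end LinearMap.BilinForm

theorem stmt2_general (d : ℕ)
    (V : Type*) [AddCommGroup V] [Module ℝ V]
    (g : V →ₗ[ℝ] V →ₗ[ℝ] ℝ) (hg : ∀ v w, g v w = g w v)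
    (b : Module.Basis (Fin (d + 1)) ℝ V)
    (hsig : ∀ i j : Fin (d + 1),
      g (b i) (b j) = if i = j then (if i = 0 then (-1 : ℝ) else 1) else 0)
    (n u : V) (hn : g n n = -1) (hu : g u u < 0) (hfut : g n u < 0) :
    ∀ v : V, v ≠ 0 →
      0 < -(g n u) * g v v + g n v * g u v + g u v * g n v := by
  have hspace : LinearMap.BilinForm.PosDefOnOrthogonal g n :=
    (LinearMap.BilinForm.posDefOnOrthogonal_basis b 0 hsig).of_apply_self_neg hg
      (by simpa using hsig 0 0) (by rw [hn]; norm_num)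
  exact hspace.timelike_contraction_pos hg hn hu hfut

theorem stmt2 (d : ℕ) (hd : 1 ≤ d)
    (V : Type*) [AddCommGroup V] [Module ℝ V]
    (g : V →ₗ[ℝ] V →ₗ[ℝ] ℝ) (hg : ∀ v w, g v w = g w v)
    (b : Module.Basis (Fin (d + 1)) ℝ V)
    (hsig : ∀ i j : Fin (d + 1),
      g (b i) (b j) = if i = j then (if i = 0 then (-1 : ℝ) else 1) else 0)
    (n u : V) (hn : g n n = -1) (hu : g u u < 0) (hfut : g n u < 0) :
    ∀ v : V, v ≠ 0 →
      0 < -(g n u) * g v v + g n v * g u v + g u v * g n v :=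
  stmt2_general d V g hg b hsig n u hn hu hfut
end

section
/- Let g be a Lorentzian inner product of signature (-,+,...,+) on a real vector space V of dimension d+1 ≥ 2. Let T ∈ V with g(T,T) = -1 and N ∈ V with g(N,N) = 1, g(T,N) = 0. Let α > 0 and 0 < δ ≤ α/(1+α²). Set u = T + δN and define the bilinear form B(v,w) := -g(N,u) g(v,w) + g(N,v) g(u,w) + g(u,v) g(N,w). Then for every v ∈ V satisfying the homogeneous boundary condition g(T,v) + α g(N,v) = 0, one has B(v,v) ≤ -δ [ (g(T,v))² + (g(N,v))² + H(v,v) ], where H(v,w) := g(v,w) + g(T,v)g(T,w) - g(N,v)g(N,w). In particular B is negative definite on the subspace {v : g(T,v) + α g(N,v) = 0}. -/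
/-!
On the boundary subspace g(T,v) = -α g(N,v), the difference of the two sides of the estimate is
2 g(N,v)² (δ(1+α²) - α) ≤ 0, a one-line computation. Strictness comes from the Lorentzian
signature: the bracket is g(T,v)² + g(N,v)² + g(w,w) for the g-orthogonal projection w of v onto
span{T,N}ᗮ, and g is positive definite on the orthogonal complement of the unit timelike vector T
(in coordinates, by Cauchy–Schwarz for the spatial parts).
-/

open Finset

def minkowski {d : ℕ} (x y : Fin (d + 1) → ℝ) : ℝ :=
  -(x 0 * y 0) + ∑ i : Fin d, x i.succ * y i.succ

theorem sum_sq_succ_le_mul_minkowski_self {d : ℕ} {t w : Fin (d + 1) → ℝ}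
    (ht : minkowski t t = -1) (htw : minkowski t w = 0) :
    ∑ i : Fin d, w i.succ ^ 2 ≤ t 0 ^ 2 * minkowski w w := by
  have cauchySchwarz := sum_mul_sq_le_sq_mul_sq univ (fun i : Fin d => t i.succ)
    fun i => w i.succ
  have hdot : ∑ i : Fin d, t i.succ * w i.succ = t 0 * w 0 := by
    rw [minkowski] at htw; linarith
  have hnorm : ∑ i : Fin d, t i.succ ^ 2 = t 0 ^ 2 - 1 := by
    simp only [minkowski, ← sq] at ht; linarith
  rw [hdot, hnorm] at cauchySchwarz
  simp only [minkowski, ← sq]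
  linear_combination cauchySchwarz

theorem minkowski_self_pos_of_orthogonal {d : ℕ} {t w : Fin (d + 1) → ℝ}
    (ht : minkowski t t = -1) (htw : minkowski t w = 0) (hw : w ≠ 0) :
    0 < minkowski w w := by
  have hspatial := sum_sq_succ_le_mul_minkowski_self ht htw
  have ht0 : 1 ≤ t 0 ^ 2 := by
    have : 0 ≤ ∑ i : Fin d, t i.succ ^ 2 := by positivity
    simp only [minkowski, sq] at ht this ⊢
    linarith
  by_contra! hnonpos
  have hsucc : ∀ i : Fin d, w i.succ = 0 := by
    have hzero : ∑ i : Fin d, w i.succ ^ 2 = 0 :=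
      le_antisymm (hspatial.trans (mul_nonpos_of_nonneg_of_nonpos (by positivity) hnonpos))
        (by positivity)
    intro i
    exact pow_eq_zero_iff two_ne_zero |>.mp <|
      (sum_eq_zero_iff_of_nonneg fun j _ => sq_nonneg (w j.succ)).mp hzero i (mem_univ i)
  have hzero : w 0 = 0 := by
    have : t 0 * w 0 = 0 := by simpa [minkowski, hsucc] using htw
    exact (mul_eq_zero.mp this).resolve_left fun h => by nlinarith
  exact hw (funext fun i => Fin.cases hzero hsucc i)

theorem apply_eq_minkowski {d : ℕ} {V : Type*} [AddCommGroup V] [Module ℝ V]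
    {g : V →ₗ[ℝ] V →ₗ[ℝ] ℝ} {b : Module.Basis (Fin (d + 1)) ℝ V}
    (hsig : ∀ i j : Fin (d + 1),
      g (b i) (b j) = if i = j then (if i = 0 then (-1 : ℝ) else 1) else 0)
    (v w : V) : g v w = minkowski (b.repr v) (b.repr w) := by
  conv_lhs => rw [← b.sum_repr v, ← b.sum_repr w]
  simp only [map_sum, map_smul, LinearMap.sum_apply, LinearMap.smul_apply, smul_eq_mul, hsig,
    mul_ite, mul_zero, sum_ite_eq', mem_univ, if_true]
  simp only [minkowski, Fin.sum_univ_succ, Fin.succ_ne_zero, if_true, if_false,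
    mul_comm (b.repr w _), mul_one, mul_neg_one, neg_mul]

section

variable {V : Type*} [AddCommGroup V] [Module ℝ V] {g : V →ₗ[ℝ] V →ₗ[ℝ] ℝ}

theorem apply_self_pos_of_apply_eq_zero {d : ℕ} {b : Module.Basis (Fin (d + 1)) ℝ V}
    (hsig : ∀ i j : Fin (d + 1),
      g (b i) (b j) = if i = j then (if i = 0 then (-1 : ℝ) else 1) else 0)
    {T w : V} (hT : g T T = -1) (hTw : g T w = 0) (hw : w ≠ 0) : 0 < g w w := by
  rw [apply_eq_minkowski hsig] at hT hTw ⊢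
  exact minkowski_self_pos_of_orthogonal hT hTw <|
    Finsupp.coe_eq_zero.not.mpr (b.repr.map_ne_zero_iff.mpr hw)

theorem sq_add_sq_add_transverse_pos (hg : ∀ v w, g v w = g w v) {T N : V}
    (hT : g T T = -1) (hN : g N N = 1) (hTN : g T N = 0)
    (hpos : ∀ w, g T w = 0 → w ≠ 0 → 0 < g w w) {v : V} (hv : v ≠ 0) :
    0 < g T v ^ 2 + g N v ^ 2 + (g v v + g T v * g T v - g N v * g N v) := by
  set w := v + g T v • T - g N v • N with hw
  have hTw : g T w = 0 := by
    simp only [w, map_add, map_sub, map_smul, smul_eq_mul, hT, hTN]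
    ring
  have hww : g w w = g v v + g T v * g T v - g N v * g N v := by
    simp only [w, map_add, map_sub, map_smul, LinearMap.add_apply, LinearMap.sub_apply,
      LinearMap.smul_apply, smul_eq_mul, hT, hN, hTN, hg N T, hg v T, hg v N]
    ring
  rw [← hww]
  rcases eq_or_ne w 0 with hw0 | hw0
  · have hcoeff : g T v ≠ 0 ∨ g N v ≠ 0 := by
      by_contra! h
      rw [hw, h.1, h.2, zero_smul, zero_smul, add_zero, sub_zero] at hw0
      exact hv hw0
    simp only [hw0, map_zero, add_zero]
    rcases hcoeff with h | h <;> positivity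
  · have hpos_w := hpos w hTw hw0
    positivity

end

theorem stmt3_general (d : ℕ)
    (V : Type*) [AddCommGroup V] [Module ℝ V]
    (g : V →ₗ[ℝ] V →ₗ[ℝ] ℝ) (hg : ∀ v w, g v w = g w v)
    (b : Module.Basis (Fin (d + 1)) ℝ V)
    (hsig : ∀ i j : Fin (d + 1),
      g (b i) (b j) = if i = j then (if i = 0 then (-1 : ℝ) else 1) else 0)
    (T N : V) (hT : g T T = -1) (hN : g N N = 1) (hTN : g T N = 0)
    (α δ : ℝ) (hδ0 : 0 < δ) (hδ : δ ≤ α / (1 + α ^ 2))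
    (u : V) (hu : u = T + δ • N)
    (B : V → V → ℝ)
    (hB : ∀ v w, B v w = -(g N u) * g v w + g N v * g u w + g u v * g N w)
    (H : V → V → ℝ)
    (hH : ∀ v w, H v w = g v w + g T v * g T w - g N v * g N w) :
    (∀ v : V, g T v + α * g N v = 0 →
      B v v ≤ -δ * ((g T v) ^ 2 + (g N v) ^ 2 + H v v)) ∧
    (∀ v : V, g T v + α * g N v = 0 → v ≠ 0 → B v v < 0) := by
  have hgu : ∀ w, g u w = g T w + δ * g N w := fun w => by simp [hu]
  have hNu : g N u = δ := by simp [hu, hg N T, hTN, hN]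
  have hδα : δ * (1 + α ^ 2) ≤ α := (le_div_iff₀ (by positivity)).mp hδ
  have estimate : ∀ v, g T v + α * g N v = 0 →
      B v v ≤ -δ * ((g T v) ^ 2 + (g N v) ^ 2 + H v v) := by
    intro v hv
    rw [hB, hH, hNu, hgu, show g T v = -α * g N v by linarith]
    nlinarith [mul_nonneg (sq_nonneg (g N v)) (sub_nonneg.mpr hδα)]
  refine ⟨estimate, fun v hv hv0 => (estimate v hv).trans_lt ?_⟩
  have hpos := sq_add_sq_add_transverse_pos hg hT hN hTN
    (fun w => apply_self_pos_of_apply_eq_zero hsig hT) hv0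
  rw [hH, neg_mul, neg_lt_zero]
  exact mul_pos hδ0 hpos

theorem stmt3 (d : ℕ) (hd : 1 ≤ d)
    (V : Type*) [AddCommGroup V] [Module ℝ V]
    (g : V →ₗ[ℝ] V →ₗ[ℝ] ℝ) (hg : ∀ v w, g v w = g w v)
    (b : Module.Basis (Fin (d + 1)) ℝ V)
    (hsig : ∀ i j : Fin (d + 1),
      g (b i) (b j) = if i = j then (if i = 0 then (-1 : ℝ) else 1) else 0)
    (T N : V) (hT : g T T = -1) (hN : g N N = 1) (hTN : g T N = 0)
    (α δ : ℝ) (hα : 0 < α) (hδ0 : 0 < δ) (hδ : δ ≤ α / (1 + α ^ 2))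
    (u : V) (hu : u = T + δ • N)
    (B : V → V → ℝ)
    (hB : ∀ v w, B v w = -(g N u) * g v w + g N v * g u w + g u v * g N w)
    (H : V → V → ℝ)
    (hH : ∀ v w, H v w = g v w + g T v * g T w - g N v * g N w) :
    (∀ v : V, g T v + α * g N v = 0 →
      B v v ≤ -δ * ((g T v) ^ 2 + (g N v) ^ 2 + H v v)) ∧
    (∀ v : V, g T v + α * g N v = 0 → v ≠ 0 → B v v < 0) :=
  stmt3_general d V g hg b hsig T N hT hN hTN α δ hδ0 hδ u hu B hB H hH
end

section
/- Under the hypotheses of the previous lemma but with inhomogeneous boundary condition g(T,v) + α g(N,v) = G for a real number G, one has the identity B(v,v) = -δ[(g(T,v))² + (g(N,v))² + H(v,v)] + 2[δ(α²+1) - α](g(N,v))² + 2(1-2δα) g(N,v) G + 2δ G². -/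
theorem stmt4
    (V : Type*) [AddCommGroup V] [Module ℝ V]
    (g : V →ₗ[ℝ] V →ₗ[ℝ] ℝ) (hg : ∀ v w, g v w = g w v)
    (T N : V) (hT : g T T = -1) (hN : g N N = 1) (hTN : g T N = 0)
    (α δ : ℝ) (hα : 0 < α) (hδ0 : 0 < δ)
    (u : V) (hu : u = T + δ • N)
    (B : V → V → ℝ)
    (hB : ∀ v w, B v w = -(g N u) * g v w + g N v * g u w + g u v * g N w)
    (H : V → V → ℝ)
    (hH : ∀ v w, H v w = g v w + g T v * g T w - g N v * g N w)
    (G : ℝ) (v : V) (hbc : g T v + α * g N v = G) :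
    B v v = -δ * ((g T v) ^ 2 + (g N v) ^ 2 + H v v)
      + 2 * (δ * (α ^ 2 + 1) - α) * (g N v) ^ 2
      + 2 * (1 - 2 * δ * α) * g N v * G + 2 * δ * G ^ 2 := by
  have hNT : g N T = 0 := (hg N T).trans hTN
  have huv : g u v = g T v + δ * g N v := by
    simp [hu, map_add, map_smul]
  have hvu : g v u = g T v + δ * g N v := (hg v u).trans huv
  have hNu : g N u = δ := by simp [hu, map_add, map_smul, hNT, hN]
  rw [hB, hH, huv, hNu, ← hbc]
  ring
end

section
/- Let g be a Lorentzian inner product of signature (-,+,...,+) on V, dim V = d+1, with orthonormal pair T (g(T,T)=-1), N (g(N,N)=1, g(T,N)=0), α > 0, δ > 0, u = T + δN, and B(v,w) = -g(N,u)g(v,w) + g(N,v)g(u,w) + g(u,v)g(N,w). Then the symmetric bilinear form B on V has signature (1,d), i.e. it is negative definite on a d-dimensional subspace and positive definite on a 1-dimensional subspace, provided 0 < δ < 1. -/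
/-!
Expanding `u = T + δN` gives `g(N,u) = δ` and `g(u,u) = δ² - 1 < 0`, so `u` is timelike. By the
reverse Cauchy–Schwarz inequality, `g` is positive definite on the hyperplane `u^⊥ = ker g(u,·)`,
where `B(v,v) = -δ g(v,v) < 0`. On the line through `N` one has `B(tN,tN) = δ t² > 0`.
-/

open Module

def minkowskiForm {d : ℕ} (x y : Fin (d + 1) → ℝ) : ℝ :=
  -(x 0 * y 0) + ∑ i : Fin d, x i.succ * y i.succ

theorem minkowskiForm_pos_of_timelike_of_orthogonal {d : ℕ} {a x : Fin (d + 1) → ℝ}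
    (ha : minkowskiForm a a < 0) (hax : minkowskiForm a x = 0) (hx : x ≠ 0) :
    0 < minkowskiForm x x := by
  unfold minkowskiForm at *
  set A := ∑ i : Fin d, a i.succ ^ 2
  set S := ∑ i : Fin d, x i.succ ^ 2
  simp only [← sq] at ha ⊢
  have hA : 0 ≤ A := Finset.sum_nonneg fun i _ => sq_nonneg _
  have hS : 0 ≤ S := Finset.sum_nonneg fun i _ => sq_nonneg _
  have hcs : (a 0 * x 0) ^ 2 ≤ A * S := by
    rw [show a 0 * x 0 = ∑ i : Fin d, a i.succ * x i.succ by linarith]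
    exact Finset.sum_mul_sq_le_sq_mul_sq _ _ _
  by_contra! hxx
  -- `a₀² x₀² ≤ A S ≤ A x₀²` with `A < a₀²` forces `x₀ = 0`, and then `S ≤ x₀² = 0`.
  have hx0 : x 0 = 0 := by
    have : (a 0 ^ 2 - A) * x 0 ^ 2 ≤ 0 := by nlinarith
    exact pow_eq_zero_iff two_ne_zero |>.mp <| le_antisymm
      (nonpos_of_mul_nonpos_right this (by linarith)) (sq_nonneg _)
  have hxs : ∀ i : Fin d, x i.succ = 0 := fun i =>
    pow_eq_zero_iff two_ne_zero |>.mp <|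
      (Finset.sum_eq_zero_iff_of_nonneg fun i _ => sq_nonneg (x i.succ)).mp
        (by rw [hx0] at hxx; linarith) i (Finset.mem_univ i)
  exact hx <| funext fun i => Fin.cases hx0 hxs i

section LorentzBasis

variable {d : ℕ} {V : Type*} [AddCommGroup V] [Module ℝ V] {g : V →ₗ[ℝ] V →ₗ[ℝ] ℝ}
  {b : Basis (Fin (d + 1)) ℝ V}

theorem apply_eq_minkowskiForm_repr
    (hsig : ∀ i j : Fin (d + 1),
      g (b i) (b j) = if i = j then (if i = 0 then (-1 : ℝ) else 1) else 0) (v w : V) :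
    g v w = minkowskiForm (b.repr v) (b.repr w) := by
  conv_lhs => rw [← b.sum_repr v, ← b.sum_repr w]
  simp only [map_sum, map_smul, LinearMap.sum_apply, LinearMap.smul_apply, smul_eq_mul, hsig,
    mul_ite, mul_zero, Finset.sum_ite_eq', Finset.mem_univ, if_true]
  simp only [Fin.sum_univ_succ, Fin.succ_ne_zero, if_true, if_false, minkowskiForm, mul_neg,
    mul_one, neg_mul, mul_comm (b.repr w _)]

theorem pos_of_timelike_of_apply_eq_zero
    (hsig : ∀ i j : Fin (d + 1),
      g (b i) (b j) = if i = j then (if i = 0 then (-1 : ℝ) else 1) else 0)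
    {u v : V} (hu : g u u < 0) (huv : g u v = 0) (hv : v ≠ 0) : 0 < g v v := by
  rw [apply_eq_minkowskiForm_repr hsig] at hu huv ⊢
  exact minkowskiForm_pos_of_timelike_of_orthogonal hu huv (by simpa using hv)

end LorentzBasis

theorem stmt6_general (d : ℕ)
    (V : Type*) [AddCommGroup V] [Module ℝ V]
    (g : V →ₗ[ℝ] V →ₗ[ℝ] ℝ) (hg : ∀ v w, g v w = g w v)
    (b : Module.Basis (Fin (d + 1)) ℝ V)
    (hsig : ∀ i j : Fin (d + 1),
      g (b i) (b j) = if i = j then (if i = 0 then (-1 : ℝ) else 1) else 0)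
    (T N : V) (hT : g T T = -1) (hN : g N N = 1) (hTN : g T N = 0)
    (δ : ℝ) (hδ0 : 0 < δ) (hδ1 : δ < 1)
    (u : V) (hu : u = T + δ • N)
    (B : V → V → ℝ)
    (hB : ∀ v w, B v w = -(g N u) * g v w + g N v * g u w + g u v * g N w) :
    ∃ P Q : Submodule ℝ V,
      Module.finrank ℝ Q = 1 ∧ Module.finrank ℝ P = d ∧
      (∀ v ∈ P, v ≠ 0 → B v v < 0) ∧ (∀ v ∈ Q, v ≠ 0 → 0 < B v v) := by
  have hNu : g N u = δ := by simp [hu, ← hg T N, hTN, hN]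
  have huN : g u N = δ := by simp [hu, hTN, hN]
  have huu : g u u < 0 := by
    have : g u u = δ ^ 2 - 1 := by simp [hu, ← hg T N, hT, hTN, hN]; ring
    nlinarith
  have : FiniteDimensional ℝ V := .of_basis b
  refine ⟨LinearMap.ker (g u), ℝ ∙ N, ?_, ?_, ?_, ?_⟩
  · exact finrank_span_singleton fun h => by simp [h] at hN
  · have hgu : g u ≠ 0 := fun h => by simp [h] at huu
    have := Module.Dual.finrank_ker_add_one_of_ne_zero hgu
    rw [finrank_eq_card_basis b, Fintype.card_fin] at this
    omega
  · intro v (hv : g u v = 0) hv0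
    rw [hB, hNu, hv]
    nlinarith [pos_of_timelike_of_apply_eq_zero hsig huu hv hv0]
  · rintro _ hv hv0
    obtain ⟨t, rfl⟩ := Submodule.mem_span_singleton.mp hv
    have ht : 0 < t ^ 2 := pow_two_pos_of_ne_zero fun h => by simp [h] at hv0
    simp only [hB, map_smul, LinearMap.smul_apply, smul_eq_mul, hNu, hN, huN]
    nlinarith [mul_pos hδ0 ht]

theorem stmt6 (d : ℕ) (hd : 1 ≤ d)
    (V : Type*) [AddCommGroup V] [Module ℝ V]
    (g : V →ₗ[ℝ] V →ₗ[ℝ] ℝ) (hg : ∀ v w, g v w = g w v)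
    (b : Module.Basis (Fin (d + 1)) ℝ V)
    (hsig : ∀ i j : Fin (d + 1),
      g (b i) (b j) = if i = j then (if i = 0 then (-1 : ℝ) else 1) else 0)
    (T N : V) (hT : g T T = -1) (hN : g N N = 1) (hTN : g T N = 0)
    (α δ : ℝ) (hα : 0 < α) (hδ0 : 0 < δ) (hδ1 : δ < 1)
    (u : V) (hu : u = T + δ • N)
    (B : V → V → ℝ)
    (hB : ∀ v w, B v w = -(g N u) * g v w + g N v * g u w + g u v * g N w) :
    ∃ P Q : Submodule ℝ V,
      Module.finrank ℝ Q = 1 ∧ Module.finrank ℝ P = d ∧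
      (∀ v ∈ P, v ≠ 0 → B v v < 0) ∧ (∀ v ∈ Q, v ≠ 0 → 0 < B v v) :=
  stmt6_general d V g hg b hsig T N hT hN hTN δ hδ0 hδ1 u hu B hB
end

section
/- In the setting of the previous statement, the subspace 𝒩₋ = {(Φ,V) ∈ ℝ^N × (V*⊗ℝ^N) : (T^b+αN^b)V_b^A = c^{aA}_B V_a^B + d^A_B Φ^B for all A} has dimension (d+1)N, and the symmetric bilinear form B(N;·,·) on ℝ^N × (V*⊗ℝ^N) has signature (N,(d+1)N); hence 𝒩₋ is a maximal non-positive subspace for B(N;·,·). -/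
/-!
The boundary space `𝒩₋` is the kernel of a linear map onto `ℝ^N`. The map is onto because on
the vectors `Φ = 0, v_A = s_A (αN - T)` it is `(1 + α²) s` plus a perturbation which the
smallness of `c` (`ε < 1 + α²`, a consequence of `κ ε < δ`) keeps from cancelling it;
hence `dim 𝒩₋ = (d + 1) N`.

The form `B(N;·,·)` is positive on the `N`-dimensional space `Φ = 0, v_A = s_A (T - N)`, and
negative definite on the codimension-`N` space `g(T + N, v_A) = 0`: writing
`v_A = w_A + a_A (T + N)` with `g(T, w_A) = 0`, one finds
`B = -Λδ |Φ|²_h - 2(1 - δ) |a|²_h - δ ∑ h_AB g(w_A, w_B)`, and `g` is positive definite on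
`T^⊥`. A non-positive `S' ⊇ 𝒩₋` meets the positive space trivially, so
`dim S' ≤ (d + 1) N = dim 𝒩₋`.
-/

open Finset Module

namespace Matrix.PosDef

variable {ι : Type*} [Fintype ι] {h : Matrix ι ι ℝ} {V : Type*} [AddCommGroup V] [Module ℝ V]

theorem sum_sum_mul_apply_pos (hpos : h.PosDef) {F : V →ₗ[ℝ] V →ₗ[ℝ] ℝ} {W : Submodule ℝ V}
    (hW : ∀ w ∈ W, w ≠ 0 → 0 < F w w) {w : ι → V} (hwW : ∀ A, w A ∈ W) (hw : w ≠ 0) :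
    0 < ∑ A, ∑ B, h A B * F (w A) (w B) := by
  classical
  obtain ⟨M, rfl⟩ : ∃ M : Matrix ι ι ℝ, h = star M * M := by
    open scoped MatrixOrder in
    exact CStarAlgebra.nonneg_iff_eq_star_mul_self.mp hpos.posSemidef.nonneg
  set z : ι → V := fun k => ∑ A, M k A • w A
  have hsum : ∑ A, ∑ B, (star M * M) A B * F (w A) (w B) = ∑ k, F (z k) (z k) := calc
    _ = ∑ A, ∑ B, ∑ k, M k A * M k B * F (w A) (w B) := by
      simp [Matrix.mul_apply, Finset.sum_mul]
    _ = ∑ k, ∑ A, ∑ B, M k A * M k B * F (w A) (w B) :=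
      (Finset.sum_congr rfl fun A _ => Finset.sum_comm).trans Finset.sum_comm
    _ = ∑ k, F (z k) (z k) := Finset.sum_congr rfl fun k _ => by
      simp only [z, map_sum, map_smul, LinearMap.sum_apply, LinearMap.smul_apply, smul_eq_mul,
        Finset.mul_sum]
      rw [Finset.sum_comm]
      exact Finset.sum_congr rfl fun A _ => Finset.sum_congr rfl fun B _ => by ring
  have hzW k : z k ∈ W := W.sum_mem fun A _ => W.smul_mem _ (hwW A)
  have hnonneg k : 0 ≤ F (z k) (z k) := by
    by_cases hk : z k = 0
    · simp [hk]
    · exact (hW _ (hzW k) hk).le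
  -- `M` is injective (as `h = Mᴴ M` is), so `M w = 0` forces `w = 0`; test against functionals.
  obtain ⟨k, hk⟩ : ∃ k, z k ≠ 0 := by
    by_contra! hz
    refine hw (funext fun A => (forall_dual_apply_eq_zero_iff ℝ _).mp fun φ => ?_)
    set y : ι → ℝ := fun A => φ (w A)
    have hMy : M *ᵥ y = 0 := funext fun k => by
      simpa [z, y, Matrix.mulVec, dotProduct] using congrArg φ (hz k)
    by_contra hA
    have hy : y ≠ 0 := fun hy => hA (congrFun hy A)
    have := hpos.dotProduct_mulVec_pos hy
    rw [← Matrix.mulVec_mulVec, hMy, Matrix.mulVec_zero, dotProduct_zero] at this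
    exact this.false
  rw [hsum]
  exact Finset.sum_pos' (fun k _ => hnonneg k) ⟨k, Finset.mem_univ _, hW _ (hzW k) hk⟩

theorem sum_sum_mul_apply_nonneg (hpos : h.PosDef) {F : V →ₗ[ℝ] V →ₗ[ℝ] ℝ} {W : Submodule ℝ V}
    (hW : ∀ w ∈ W, w ≠ 0 → 0 < F w w) {w : ι → V} (hwW : ∀ A, w A ∈ W) :
    0 ≤ ∑ A, ∑ B, h A B * F (w A) (w B) := by
  rcases eq_or_ne w 0 with rfl | hw
  · simp
  · exact (hpos.sum_sum_mul_apply_pos hW hwW hw).le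

theorem sum_sum_mul_mul_pos (hpos : h.PosDef) {s : ι → ℝ} (hs : s ≠ 0) :
    0 < ∑ A, ∑ B, h A B * s A * s B := by
  simpa only [mul_assoc, LinearMap.mul_apply'] using
    hpos.sum_sum_mul_apply_pos (F := LinearMap.mul ℝ ℝ) (W := ⊤)
      (fun _ _ hx => mul_self_pos.mpr hx) (fun _ => Submodule.mem_top) hs

theorem sum_sum_mul_mul_nonneg (hpos : h.PosDef) (s : ι → ℝ) :
    0 ≤ ∑ A, ∑ B, h A B * s A * s B := by
  rcases eq_or_ne s 0 with rfl | hs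
  · simp
  · exact (hpos.sum_sum_mul_mul_pos hs).le

end Matrix.PosDef

section Lorentz

variable {d : ℕ} {V : Type*} [AddCommGroup V] [Module ℝ V] {g : V →ₗ[ℝ] V →ₗ[ℝ] ℝ}
  {b : Basis (Fin (d + 1)) ℝ V}

theorem apply_eq_minkowski_repr
    (hsig : ∀ i j, g (b i) (b j) = if i = j then (if i = 0 then (-1 : ℝ) else 1) else 0)
    (v z : V) :
    g v z = -(b.repr v 0 * b.repr z 0) + ∑ i : Fin d, b.repr v i.succ * b.repr z i.succ := by
  conv_lhs => rw [← b.sum_repr v, ← b.sum_repr z]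
  simp only [map_sum, map_smul, LinearMap.sum_apply, LinearMap.smul_apply, smul_eq_mul, hsig,
    mul_ite, mul_zero, Finset.sum_ite_eq', Finset.mem_univ, if_true]
  rw [Fin.sum_univ_succ]
  simp only [Fin.succ_ne_zero, if_true, if_false, mul_one, mul_comm (b.repr z _)]
  ring

theorem apply_self_pos_of_orthogonal_timelike
    (hsig : ∀ i j, g (b i) (b j) = if i = j then (if i = 0 then (-1 : ℝ) else 1) else 0)
    {T w : V} (hT : g T T = -1) (hTw : g T w = 0) (hw : w ≠ 0) : 0 < g w w := by
  rw [apply_eq_minkowski_repr hsig] at hT hTw ⊢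
  -- Cauchy–Schwarz on the spatial parts gives `(t₀ x₀)² ≤ (t₀² - 1) |x'|²`.
  set t := b.repr T
  set x := b.repr w
  have hCS := Finset.sum_mul_sq_le_sq_mul_sq univ (fun i : Fin d => t i.succ) (fun i => x i.succ)
  simp only [sq] at hCS
  have hx : 0 ≤ ∑ i : Fin d, x i.succ * x i.succ := Finset.sum_nonneg fun i _ => mul_self_nonneg _
  have hq : ∑ i : Fin d, t i.succ * x i.succ = t 0 * x 0 := by linarith
  have hp : ∑ i : Fin d, t i.succ * t i.succ = t 0 * t 0 - 1 := by linarith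
  rw [hq, hp] at hCS
  rcases hx.lt_or_eq with hx | hx
  · have key : t 0 * t 0 * (-(x 0 * x 0) + ∑ i : Fin d, x i.succ * x i.succ)
        ≥ ∑ i : Fin d, x i.succ * x i.succ := by nlinarith
    nlinarith [mul_self_nonneg (t 0)]
  · have hsucc : ∀ i : Fin d, x i.succ = 0 := fun i =>
      mul_self_eq_zero.mp ((Finset.sum_eq_zero_iff_of_nonneg fun i _ => mul_self_nonneg _).mp
        hx.symm i (mem_univ _))
    rw [← hx, mul_zero] at hCS
    have ht0 : t 0 ≠ 0 := by
      intro ht0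
      have ht : 0 ≤ ∑ i : Fin d, t i.succ * t i.succ :=
        Finset.sum_nonneg fun i _ => mul_self_nonneg _
      simp only [ht0, mul_zero] at hp
      linarith
    have hzero : x 0 = 0 :=
      (mul_eq_zero.mp (mul_self_eq_zero.mp (le_antisymm hCS (mul_self_nonneg _)))).resolve_left ht0
    exact absurd (b.repr.map_eq_zero_iff.mp (Finsupp.ext fun i => Fin.cases hzero hsucc i)) hw

end Lorentz

theorem lt_one_add_sq_of_mul_lt {α δ κ ε : ℝ} (hα : 0 < α) (hδ : δ = α * (1 + α ^ 2)⁻¹ / 2)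
    (hκ : κ = 2 * (2 * δ + (1 - 2 * δ * α) ^ 2 / α) ^ 2) (hεδ : κ * ε < δ) :
    ε < 1 + α ^ 2 := by
  have ha : 0 < 1 + α ^ 2 := by positivity
  have hκ' : κ = 2 * (α ^ 4 + α ^ 2 + 1) ^ 2 / (α ^ 2 * (1 + α ^ 2) ^ 4) := by
    rw [hκ, hδ]; field_simp; ring
  have hpoly : α ^ 3 * (1 + α ^ 2) ^ 2 ≤ 4 * (α ^ 4 + α ^ 2 + 1) ^ 2 := by
    nlinarith [sq_nonneg (α ^ 2 - 1), sq_nonneg (α - 1), sq_nonneg (α ^ 2 - α), pow_pos hα 3]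
  have hδκ : δ ≤ κ * (1 + α ^ 2) := by
    rw [hκ', hδ, div_mul_eq_mul_div, div_le_div_iff₀ (by positivity) (by positivity)]
    have hlhs : α * (1 + α ^ 2)⁻¹ * (α ^ 2 * (1 + α ^ 2) ^ 4)
        = α ^ 3 * (1 + α ^ 2) ^ 2 * (1 + α ^ 2) := by
      field_simp
    rw [hlhs]
    nlinarith [mul_le_mul_of_nonneg_right hpoly ha.le]
  have hκpos : 0 < κ := by rw [hκ']; positivity
  exact lt_of_mul_lt_mul_left (hεδ.trans_le hδκ) hκpos.le

theorem mul_inv_one_add_sq_div_two_mem_Ioo {α : ℝ} (hα : 0 < α) :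
    α * (1 + α ^ 2)⁻¹ / 2 ∈ Set.Ioo 0 1 := by
  refine ⟨by positivity, ?_⟩
  rw [div_lt_iff₀ two_pos, mul_inv_lt_iff₀ (by positivity)]
  nlinarith [sq_nonneg (α - 1)]

theorem Finset.sum_sum_eq_mul_sum_sum {ι : Type*} [Fintype ι] (k : ℝ) {f q : ι → ι → ℝ}
    (hfq : ∀ A B, f A B = k * q A B) : ∑ A, ∑ B, f A B = k * ∑ A, ∑ B, q A B := by
  simp only [hfq, Finset.mul_sum]

theorem Submodule.eq_of_le_of_forall_nonpos {K E : Type*} [Field K] [AddCommGroup E] [Module K E]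
    [FiniteDimensional K E] {q : E → ℝ} {S S' P : Submodule K E}
    (hP : ∀ p ∈ P, p ≠ 0 → 0 < q p) (hdim : finrank K E ≤ finrank K S + finrank K P)
    (hSS' : S ≤ S') (hS' : ∀ p ∈ S', q p ≤ 0) : S' = S := by
  have hdisj : S' ⊓ P = ⊥ := (Submodule.eq_bot_iff _).mpr fun p hp => by
    by_contra hp0
    exact (hS' p hp.1).not_gt (hP p hp.2 hp0)
  have hsum := Submodule.finrank_sup_add_finrank_inf_eq S' P
  rw [hdisj, finrank_bot, add_zero] at hsum
  have hsup := Submodule.finrank_le (S' ⊔ P)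
  exact (Submodule.eq_of_le_of_finrank_le hSS' (by omega)).symm

theorem LinearMap.finrank_ker_add_card_of_surjective {ι E : Type*} [Fintype ι] [AddCommGroup E]
    [Module ℝ E] [FiniteDimensional ℝ E] {L : E →ₗ[ℝ] ι → ℝ} (hL : Function.Surjective L) :
    finrank ℝ (LinearMap.ker L) + Fintype.card ι = finrank ℝ E := by
  rw [← L.finrank_range_add_finrank_ker, LinearMap.range_eq_top.mpr hL, finrank_top,
    finrank_fintype_fun_eq_card, add_comm]

section Boundary

variable {ι : Type*} {V : Type*} [AddCommGroup V] [Module ℝ V]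

def smulVec (x : V) : (ι → ℝ) →ₗ[ℝ] (ι → ℝ) × (ι → V) :=
  LinearMap.inr ℝ _ _ ∘ₗ (LinearMap.toSpanSingleton ℝ V x).compLeft ι

theorem smulVec_apply (x : V) (s : ι → ℝ) : smulVec x s = (0, fun A => s A • x) := rfl

theorem smulVec_injective {x : V} (hx : x ≠ 0) : Function.Injective (smulVec (ι := ι) x) :=
  fun _ _ hst => funext fun A => smul_left_injective ℝ hx (congrFun (congrArg Prod.snd hst) A)

def compSnd (ℓ : V →ₗ[ℝ] ℝ) : (ι → ℝ) × (ι → V) →ₗ[ℝ] ι → ℝ :=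
  ℓ.compLeft ι ∘ₗ LinearMap.snd ℝ _ _

theorem compSnd_apply (ℓ : V →ₗ[ℝ] ℝ) (p : (ι → ℝ) × (ι → V)) :
    compSnd ℓ p = fun A => ℓ (p.2 A) := rfl

theorem compSnd_surjective {ℓ : V →ₗ[ℝ] ℝ} {x : V} (hx : ℓ x = 1) :
    Function.Surjective (compSnd (ι := ι) ℓ) :=
  fun s => ⟨smulVec x s, funext fun A => by simp [compSnd_apply, smulVec_apply, hx]⟩

variable [Fintype ι] (g : V →ₗ[ℝ] V →ₗ[ℝ] ℝ)

def boundaryMap (T N : V) (α : ℝ) (c : ι → ι → V) (dm : Matrix ι ι ℝ) :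
    (ι → ℝ) × (ι → V) →ₗ[ℝ] ι → ℝ where
  toFun p A := g T (p.2 A) + α * g N (p.2 A) - ((∑ B, g (c A B) (p.2 B)) + ∑ B, dm A B * p.1 B)
  map_add' p q := by
    ext A
    simp only [Prod.snd_add, Prod.fst_add, Pi.add_apply, map_add, mul_add, Finset.sum_add_distrib]
    ring
  map_smul' r p := by
    ext A
    simp only [Prod.smul_snd, Prod.smul_fst, Pi.smul_apply, map_smul, smul_eq_mul,
      RingHom.id_apply, mul_left_comm _ r]
    rw [← Finset.mul_sum, ← Finset.mul_sum]
    ring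

theorem boundaryMap_apply (T N : V) (α : ℝ) (c : ι → ι → V) (dm : Matrix ι ι ℝ)
    (p : (ι → ℝ) × (ι → V)) (A : ι) :
    boundaryMap g T N α c dm p A
      = g T (p.2 A) + α * g N (p.2 A) - ((∑ B, g (c A B) (p.2 B)) + ∑ B, dm A B * p.1 B) :=
  rfl

def boundaryForm (h : Matrix ι ι ℝ) (Λ : ℝ) (u N : V) (p q : (ι → ℝ) × (ι → V)) : ℝ :=
  -Λ * g u N * (∑ A, ∑ B, h A B * p.1 A * q.1 B)
    + ∑ A, ∑ B, h A B *
        (-(g N u) * g (p.2 A) (q.2 B) + g N (p.2 A) * g u (q.2 B) + g u (p.2 A) * g N (q.2 B))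

variable {g}

theorem boundaryMap_surjective {h : Matrix ι ι ℝ} (hpos : h.PosDef) (hg : ∀ v w, g v w = g w v)
    {T N : V} (hT : g T T = -1) (hN : g N N = 1) (hTN : g T N = 0)
    {α ε : ℝ} {c : ι → ι → V} (dm : Matrix ι ι ℝ)
    (hc : ∀ v : ι → V, ∑ A, ∑ B, h A B * (∑ C, g (c A C) (v C)) * (∑ D, g (c B D) (v D))
        ≤ ε * ∑ A, ∑ B, h A B * (g (v A) (v B) + 2 * g T (v A) * g T (v B)))
    (hε : ε < 1 + α ^ 2) :
    Function.Surjective (boundaryMap g T N α c dm) := by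
  set x := α • N - T
  have hTx : g T x = 1 := by simp [x, hT, hTN]
  have hNx : g N x = α := by simp [x, hN, hg N T, hTN]
  have hxx : g x x = α ^ 2 - 1 := by simp [x, hT, hN, hTN, hg N T]; ring
  -- On `(0, s • x)` the map is `s ↦ (1 + α²) s - C s`, while the bound on `c` gives
  -- `|C s|²_h ≤ ε (1 + α²) |s|²_h` with `ε < 1 + α²`.
  have hinj : Function.Injective (boundaryMap g T N α c dm ∘ₗ smulVec x) := by
    rw [← LinearMap.ker_eq_bot, Submodule.eq_bot_iff]
    intro s hs
    by_contra hs0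
    have hrel : ∀ A, ∑ B, s B * g (c A B) x = (1 + α ^ 2) * s A := fun A => by
      have := congrFun (LinearMap.mem_ker.mp hs) A
      simp [boundaryMap_apply, smulVec_apply, hTx, hNx] at this
      linarith
    set Q := ∑ A, ∑ B, h A B * s A * s B
    have hlhs : ∑ A, ∑ B, h A B * (∑ C, g (c A C) (s C • x)) * (∑ D, g (c B D) (s D • x))
        = (1 + α ^ 2) ^ 2 * Q := Finset.sum_sum_eq_mul_sum_sum _ fun A B => by
      simp only [map_smul, smul_eq_mul, hrel]; ring
    have hrhs : ∑ A, ∑ B, h A B * (g (s A • x) (s B • x) + 2 * g T (s A • x) * g T (s B • x))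
        = (1 + α ^ 2) * Q := Finset.sum_sum_eq_mul_sum_sum _ fun A B => by
      simp only [map_smul, LinearMap.smul_apply, smul_eq_mul, hTx, hxx]; ring
    have hcs : (1 + α ^ 2) ^ 2 * Q ≤ ε * ((1 + α ^ 2) * Q) :=
      (hlhs.symm.trans_le (hc fun B => s B • x)).trans_eq (congrArg (ε * ·) hrhs)
    have hQ : 0 < (1 + α ^ 2) * Q := mul_pos (by positivity) (hpos.sum_sum_mul_mul_pos hs0)
    nlinarith [mul_pos hQ (sub_pos.mpr hε)]
  exact Function.Surjective.of_comp (LinearMap.injective_iff_surjective.mp hinj)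

theorem boundaryForm_smulVec (h : Matrix ι ι ℝ) (Λ : ℝ) (u N x : V) (s : ι → ℝ) :
    boundaryForm g h Λ u N (smulVec x s) (smulVec x s)
      = (2 * g N x * g u x - g N u * g x x) * ∑ A, ∑ B, h A B * s A * s B := by
  simp only [boundaryForm, smulVec_apply, Pi.zero_apply, mul_zero, Finset.sum_const_zero,
    zero_add]
  exact Finset.sum_sum_eq_mul_sum_sum _ fun A B => by
    simp only [map_smul, LinearMap.smul_apply, smul_eq_mul]; ring

theorem boundaryForm_pos_of_mem_range {h : Matrix ι ι ℝ} (hpos : h.PosDef)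
    (hg : ∀ v w, g v w = g w v) {T N : V} (hT : g T T = -1) (hN : g N N = 1) (hTN : g T N = 0)
    (Λ : ℝ) {δ : ℝ} (hδ : -1 < δ) {p : (ι → ℝ) × (ι → V)}
    (hp : p ∈ LinearMap.range (smulVec (T - N))) (hp0 : p ≠ 0) :
    0 < boundaryForm g h Λ (T + δ • N) N p p := by
  obtain ⟨s, rfl⟩ := hp
  have hs : s ≠ 0 := by rintro rfl; exact hp0 (map_zero _)
  rw [boundaryForm_smulVec]
  have hcoef : 2 * g N (T - N) * g (T + δ • N) (T - N) - g N (T + δ • N) * g (T - N) (T - N)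
      = 2 * (1 + δ) := by
    simp only [map_sub, map_add, map_smul, LinearMap.sub_apply, LinearMap.add_apply,
      LinearMap.smul_apply, smul_eq_mul, hT, hN, hTN, hg N T]
    ring
  rw [hcoef]
  exact mul_pos (by linarith) (hpos.sum_sum_mul_mul_pos hs)

theorem boundaryForm_self_of_null (hg : ∀ v w, g v w = g w v) {T N : V} (hT : g T T = -1)
    (hN : g N N = 1) (hTN : g T N = 0) (h : Matrix ι ι ℝ) (Λ δ : ℝ) {p : (ι → ℝ) × (ι → V)}
    (hp : ∀ A, g (T + N) (p.2 A) = 0) :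
    boundaryForm g h Λ (T + δ • N) N p p
      = -(Λ * δ) * (∑ A, ∑ B, h A B * p.1 A * p.1 B)
        - 2 * (1 - δ) * (∑ A, ∑ B, h A B * g N (p.2 A) * g N (p.2 B))
        - δ * ∑ A, ∑ B, h A B *
            g (p.2 A - g N (p.2 A) • (T + N)) (p.2 B - g N (p.2 B) • (T + N)) := by
  have hTv A : g T (p.2 A) = -g N (p.2 A) := by
    have := hp A
    rw [map_add, LinearMap.add_apply] at this
    linarith
  have hguN : g (T + δ • N) N = δ := by simp [hTN, hN]
  have hgNu : g N (T + δ • N) = δ := by simp [hg N T, hTN, hN]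
  have hgu A : g (T + δ • N) (p.2 A) = (δ - 1) * g N (p.2 A) := by
    simp only [map_add, map_smul, LinearMap.add_apply, LinearMap.smul_apply, smul_eq_mul, hTv]
    ring
  have hvv A B : g (p.2 A - g N (p.2 A) • (T + N)) (p.2 B - g N (p.2 B) • (T + N))
      = g (p.2 A) (p.2 B) := by
    have hnull : g (T + N) (T + N) = 0 := by simp [hT, hN, hTN, hg N T]
    simp only [map_sub, map_smul, LinearMap.sub_apply, LinearMap.smul_apply, smul_eq_mul, hp,
      hg _ (T + N), hnull]
    ring
  simp only [boundaryForm, hguN, hgNu, hgu, hvv]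
  have hsum : ∑ A, ∑ B, h A B * (-δ * g (p.2 A) (p.2 B)
        + g N (p.2 A) * ((δ - 1) * g N (p.2 B)) + (δ - 1) * g N (p.2 A) * g N (p.2 B))
      = -(2 * (1 - δ) * ∑ A, ∑ B, h A B * g N (p.2 A) * g N (p.2 B))
        - δ * ∑ A, ∑ B, h A B * g (p.2 A) (p.2 B) := by
    simp only [Finset.mul_sum, ← Finset.sum_neg_distrib, ← Finset.sum_sub_distrib]
    exact Finset.sum_congr rfl fun A _ => Finset.sum_congr rfl fun B _ => by ring
  rw [hsum]
  ring

theorem boundaryForm_neg_of_mem_ker {h : Matrix ι ι ℝ} (hpos : h.PosDef)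
    (hg : ∀ v w, g v w = g w v) {T N : V} (hT : g T T = -1) (hN : g N N = 1) (hTN : g T N = 0)
    (hTperp : ∀ w ∈ LinearMap.ker (g T), w ≠ 0 → 0 < g w w)
    {Λ δ : ℝ} (hΛ : 0 < Λ) (hδ0 : 0 < δ) (hδ1 : δ < 1) {p : (ι → ℝ) × (ι → V)}
    (hp : p ∈ LinearMap.ker (compSnd (g (T + N)))) (hp0 : p ≠ 0) :
    boundaryForm g h Λ (T + δ • N) N p p < 0 := by
  have hnull A : g (T + N) (p.2 A) = 0 := congrFun (LinearMap.mem_ker.mp hp) A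
  rw [boundaryForm_self_of_null hg hT hN hTN h Λ δ hnull]
  set a : ι → ℝ := fun A => g N (p.2 A)
  set w : ι → V := fun A => p.2 A - a A • (T + N)
  show _ - 2 * (1 - δ) * (∑ A, ∑ B, h A B * a A * a B) - δ * ∑ A, ∑ B, h A B * g (w A) (w B) < 0
  have hwT A : w A ∈ LinearMap.ker (g T) := by
    have := hnull A
    simp only [map_add, LinearMap.add_apply] at this
    simp only [w, a, LinearMap.mem_ker, map_sub, map_smul, map_add, hT, hTN, smul_eq_mul]
    linarith
  have hΦ := mul_nonneg (mul_pos hΛ hδ0).le (hpos.sum_sum_mul_mul_nonneg p.1)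
  have ha := mul_nonneg (sub_pos.mpr hδ1).le (hpos.sum_sum_mul_mul_nonneg a)
  have hw := mul_nonneg hδ0.le (hpos.sum_sum_mul_apply_nonneg hTperp hwT)
  by_cases hΦ0 : p.1 = 0
  · by_cases ha0 : a = 0
    · have hw0 : w ≠ 0 := by
        rintro hw0
        refine hp0 (Prod.ext hΦ0 (funext fun A => ?_))
        simpa [w, ha0] using congrFun hw0 A
      linarith [mul_pos hδ0 (hpos.sum_sum_mul_apply_pos hTperp hwT hw0)]
    · linarith [mul_pos (sub_pos.mpr hδ1) (hpos.sum_sum_mul_mul_pos ha0)]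
  · linarith [mul_pos (mul_pos hΛ hδ0) (hpos.sum_sum_mul_mul_pos hΦ0)]

end Boundary

/-- Vector-valued one-forms are represented by their index-raised versions
`v : Fin Nf → V`. -/
theorem stmt8_general (d : ℕ) (Nf : ℕ)
    (V : Type*) [AddCommGroup V] [Module ℝ V]
    (g : V →ₗ[ℝ] V →ₗ[ℝ] ℝ) (hg : ∀ v w, g v w = g w v)
    (b : Module.Basis (Fin (d + 1)) ℝ V)
    (hsig : ∀ i j : Fin (d + 1),
      g (b i) (b j) = if i = j then (if i = 0 then (-1 : ℝ) else 1) else 0)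
    (T N : V) (hT : g T T = -1) (hN : g N N = 1) (hTN : g T N = 0)
    (h : Matrix (Fin Nf) (Fin Nf) ℝ) (hpos : h.PosDef)
    (α : ℝ) (hα : 0 < α)
    (δ κ : ℝ) (hδ : δ = α * (1 + α ^ 2)⁻¹ / 2)
    (hκ : κ = 2 * (2 * δ + (1 - 2 * δ * α) ^ 2 / α) ^ 2)
    (c : Fin Nf → Fin Nf → V) (dm : Matrix (Fin Nf) (Fin Nf) ℝ)
    (ε Λ : ℝ) (hεδ : κ * ε < δ) (hΛ : 0 < Λ)
    (hc : ∀ v : Fin Nf → V,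
      ∑ A : Fin Nf, ∑ B : Fin Nf, h A B *
          (∑ C : Fin Nf, g (c A C) (v C)) * (∑ D : Fin Nf, g (c B D) (v D))
        ≤ ε * ∑ A : Fin Nf, ∑ B : Fin Nf, h A B *
          (g (v A) (v B) + 2 * g T (v A) * g T (v B)))
    (u : V) (hu : u = T + δ • N)
    (Bq : ((Fin Nf → ℝ) × (Fin Nf → V)) → ((Fin Nf → ℝ) × (Fin Nf → V)) → ℝ)
    (hBq : ∀ p q : (Fin Nf → ℝ) × (Fin Nf → V),
      Bq p q = -Λ * g u N * (∑ A : Fin Nf, ∑ B : Fin Nf, h A B * p.1 A * q.1 B)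
        + ∑ A : Fin Nf, ∑ B : Fin Nf, h A B *
            (-(g N u) * g (p.2 A) (q.2 B) + g N (p.2 A) * g u (q.2 B)
              + g u (p.2 A) * g N (q.2 B)))
    (S : Submodule ℝ ((Fin Nf → ℝ) × (Fin Nf → V)))
    (hS : (S : Set ((Fin Nf → ℝ) × (Fin Nf → V)))
      = {p | ∀ A : Fin Nf, g T (p.2 A) + α * g N (p.2 A)
          = (∑ B : Fin Nf, g (c A B) (p.2 B)) + ∑ B : Fin Nf, dm A B * p.1 B}) :
    Module.finrank ℝ S = (d + 1) * Nf ∧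
    (∃ P Q : Submodule ℝ ((Fin Nf → ℝ) × (Fin Nf → V)),
      Module.finrank ℝ P = Nf ∧ Module.finrank ℝ Q = (d + 1) * Nf ∧
      (∀ p ∈ P, p ≠ 0 → 0 < Bq p p) ∧ (∀ p ∈ Q, p ≠ 0 → Bq p p < 0)) ∧
    (∀ S' : Submodule ℝ ((Fin Nf → ℝ) × (Fin Nf → V)),
      S ≤ S' → (∀ p ∈ S', Bq p p ≤ 0) → S' = S) := by
  have : FiniteDimensional ℝ V := b.finiteDimensional_of_finite
  subst hu
  obtain rfl : Bq = boundaryForm g h Λ (T + δ • N) N := funext fun p => funext (hBq p)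
  have hS_ker : S = LinearMap.ker (boundaryMap g T N α c dm) := SetLike.coe_injective <|
    hS.trans (by ext p; simp [boundaryMap_apply, funext_iff, sub_eq_zero])
  obtain ⟨hδ0, hδ1⟩ := hδ ▸ mul_inv_one_add_sq_div_two_mem_Ioo hα
  have hdimE : finrank ℝ ((Fin Nf → ℝ) × (Fin Nf → V)) = Nf + (d + 1) * Nf := by
    simp only [finrank_prod, finrank_pi_fintype, finrank_self, finrank_eq_card_basis b,
      Fintype.card_fin, Finset.sum_const, Finset.card_univ, smul_eq_mul, mul_comm Nf, one_mul]
  have hdim_ker {L : (Fin Nf → ℝ) × (Fin Nf → V) →ₗ[ℝ] Fin Nf → ℝ}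
      (hL : Function.Surjective L) : finrank ℝ (LinearMap.ker L) = (d + 1) * Nf := by
    have := LinearMap.finrank_ker_add_card_of_surjective hL
    rw [hdimE, Fintype.card_fin] at this
    omega
  have hTN_ne : T - N ≠ 0 := fun h0 => by simpa [hT, hTN] using congrArg (g T) h0
  have hPpos : ∀ p ∈ LinearMap.range (smulVec (T - N)), p ≠ 0 →
      0 < boundaryForm g h Λ (T + δ • N) N p p :=
    fun p => boundaryForm_pos_of_mem_range hpos hg hT hN hTN Λ (by linarith)
  have hdimP : finrank ℝ (LinearMap.range (smulVec (ι := Fin Nf) (T - N))) = Nf := by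
    rw [LinearMap.finrank_range_of_inj (smulVec_injective hTN_ne), finrank_fin_fun]
  have hdimS : finrank ℝ S = (d + 1) * Nf := hS_ker ▸ hdim_ker
    (boundaryMap_surjective hpos hg hT hN hTN dm hc (lt_one_add_sq_of_mul_lt hα hδ hκ hεδ))
  refine ⟨hdimS,
    ⟨_, _, hdimP, hdim_ker (compSnd_surjective (x := N) (by simp [hN, hTN])), hPpos,
      fun p => boundaryForm_neg_of_mem_ker hpos hg hT hN hTN
        (fun w hw => apply_self_pos_of_orthogonal_timelike hsig hT hw) hΛ hδ0 hδ1⟩,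
    fun S' hSS' hS' => Submodule.eq_of_le_of_forall_nonpos hPpos
      (by rw [hdimE, hdimS, hdimP, add_comm]) hSS' hS'⟩

/-- Maximality of the boundary space `𝒩₋` for systems of wave equations
(Lemma 5 of the paper).  Vector-valued one-forms are represented by their
index-raised versions `v : Fin Nf → V`. -/
theorem stmt8 (d : ℕ) (hd : 1 ≤ d) (Nf : ℕ) (hNf : 0 < Nf)
    (V : Type*) [AddCommGroup V] [Module ℝ V]
    (g : V →ₗ[ℝ] V →ₗ[ℝ] ℝ) (hg : ∀ v w, g v w = g w v)
    (b : Module.Basis (Fin (d + 1)) ℝ V)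
    (hsig : ∀ i j : Fin (d + 1),
      g (b i) (b j) = if i = j then (if i = 0 then (-1 : ℝ) else 1) else 0)
    (T N : V) (hT : g T T = -1) (hN : g N N = 1) (hTN : g T N = 0)
    (h : Matrix (Fin Nf) (Fin Nf) ℝ) (hsymm : h.IsSymm) (hpos : h.PosDef)
    (α : ℝ) (hα : 0 < α)
    (δ κ : ℝ) (hδ : δ = α * (1 + α ^ 2)⁻¹ / 2)
    (hκ : κ = 2 * (2 * δ + (1 - 2 * δ * α) ^ 2 / α) ^ 2)
    (c : Fin Nf → Fin Nf → V) (dm : Matrix (Fin Nf) (Fin Nf) ℝ)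
    (ε Λ : ℝ) (hε : 0 < ε) (hεδ : κ * ε < δ) (hΛ : 0 < Λ)
    (hc : ∀ v : Fin Nf → V,
      ∑ A : Fin Nf, ∑ B : Fin Nf, h A B *
          (∑ C : Fin Nf, g (c A C) (v C)) * (∑ D : Fin Nf, g (c B D) (v D))
        ≤ ε * ∑ A : Fin Nf, ∑ B : Fin Nf, h A B *
          (g (v A) (v B) + 2 * g T (v A) * g T (v B)))
    (hd2 : ∀ Φ : Fin Nf → ℝ,
      2 * κ * ∑ A : Fin Nf, ∑ B : Fin Nf, h A B *
          (∑ C : Fin Nf, dm A C * Φ C) * (∑ D : Fin Nf, dm B D * Φ D)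
        ≤ δ * Λ * ∑ A : Fin Nf, ∑ B : Fin Nf, h A B * Φ A * Φ B)
    (u : V) (hu : u = T + δ • N)
    (Bq : ((Fin Nf → ℝ) × (Fin Nf → V)) → ((Fin Nf → ℝ) × (Fin Nf → V)) → ℝ)
    (hBq : ∀ p q : (Fin Nf → ℝ) × (Fin Nf → V),
      Bq p q = -Λ * g u N * (∑ A : Fin Nf, ∑ B : Fin Nf, h A B * p.1 A * q.1 B)
        + ∑ A : Fin Nf, ∑ B : Fin Nf, h A B *
            (-(g N u) * g (p.2 A) (q.2 B) + g N (p.2 A) * g u (q.2 B)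
              + g u (p.2 A) * g N (q.2 B)))
    (S : Submodule ℝ ((Fin Nf → ℝ) × (Fin Nf → V)))
    (hS : (S : Set ((Fin Nf → ℝ) × (Fin Nf → V)))
      = {p | ∀ A : Fin Nf, g T (p.2 A) + α * g N (p.2 A)
          = (∑ B : Fin Nf, g (c A B) (p.2 B)) + ∑ B : Fin Nf, dm A B * p.1 B}) :
    Module.finrank ℝ S = (d + 1) * Nf ∧
    (∃ P Q : Submodule ℝ ((Fin Nf → ℝ) × (Fin Nf → V)),
      Module.finrank ℝ P = Nf ∧ Module.finrank ℝ Q = (d + 1) * Nf ∧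
      (∀ p ∈ P, p ≠ 0 → 0 < Bq p p) ∧ (∀ p ∈ Q, p ≠ 0 → Bq p p < 0)) ∧
    (∀ S' : Submodule ℝ ((Fin Nf → ℝ) × (Fin Nf → V)),
      S ≤ S' → (∀ p ∈ S', Bq p p ≤ 0) → S' = S) :=
  stmt8_general d Nf V g hg b hsig T N hT hN hTN h hpos α hα δ κ hδ hκ c dm ε Λ hεδ hΛ hc u hu Bq
    hBq S hS
end

section
/- Let ω ∈ ℝ, ω ≠ 0 and R > 0. Define Φ(t,r) = ∂_z[ e^{iω(t-r)}/r + κ e^{iω(t+r-2R)}/r ] where ∂_z acts via the chain rule r = |x|, i.e. Φ = -cos θ [ (iω/r + 1/r²) e^{iω(t-r)} + κ(-iω/r + 1/r²) e^{iω(t+r-2R)} ]. Then the homogeneous Sommerfeld boundary condition (∂_t + ∂_r)(rΦ)|_{r=R} = 0 holds if and only if κ = 1/(2ω²R² + 2iωR - 1). -/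
/-!
Write `rΦ = A(r) e^{iω(t-r)} + B(r) e^{iω(t+r-2R)}` with `A, B` affine in `1/r`. The operator
`∂ₜ + ∂ᵣ` annihilates the phase of the outgoing wave and doubles that of the incoming one, so at
`r = R` both exponentials coincide and the boundary expression equals
`-cos θ · e^{iω(t-R)} / R² · (κ (2ω²R² + 2iωR - 1) - 1)`. The bracket vanishes iff `κ` is the stated
reciprocal, whose denominator has imaginary part `2ωR ≠ 0`.
-/

open Complex Topology

section WaveSums

variable {𝕜 𝔸 : Type*} [NontriviallyNormedField 𝕜] [NormedRing 𝔸] [NormedAlgebra 𝕜 𝔸]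
  {A B g h : 𝕜 → 𝔸} {A' B' g' h' : 𝔸} {t r : 𝕜}

theorem deriv_add_deriv_outgoing_add_incoming (hA : HasDerivAt A A' r) (hB : HasDerivAt B B' r)
    (hg : HasDerivAt g g' (t - r)) (hh : HasDerivAt h h' (t + r)) :
    deriv (fun s => A r * g (s - r) + B r * h (s + r)) t
        + deriv (fun x => A x * g (t - x) + B x * h (t + x)) r
      = A' * g (t - r) + B' * h (t + r) + 2 * (B r * h') := by
  have htime : HasDerivAt (fun s => A r * g (s - r) + B r * h (s + r)) (A r * g' + B r * h') t :=
    ((hg.comp_sub_const t r).const_mul _).add ((hh.comp_add_const t r).const_mul _)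
  have hradius : HasDerivAt (fun x => A x * g (t - x) + B x * h (t + x))
      (A' * g (t - r) + A r * -g' + (B' * h (t + r) + B r * h')) r :=
    (hA.mul (hg.comp_const_sub t r)).add (hB.mul (hh.comp_const_add t r))
  rw [htime.deriv, hradius.deriv]
  noncomm_ring

end WaveSums

theorem hasDerivAt_cexp_I_mul (ω u : ℝ) :
    HasDerivAt (fun u : ℝ => exp (I * ω * u)) (I * ω * exp (I * ω * u)) u := by
  simpa [mul_comm] using ((hasDerivAt_id u).ofReal_comp.const_mul (I * ω)).cexp

theorem reflection_denominator_ne_zero {ω R : ℝ} (hω : ω ≠ 0) (hR : R ≠ 0) :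
    2 * (ω : ℂ) ^ 2 * (R : ℂ) ^ 2 + 2 * I * ω * R - 1 ≠ 0 := by
  intro h
  simpa [← ofReal_pow, hω, hR] using congrArg im h

/-- `Φ(t, r, θ)`: the `z`-derivative of the outgoing monopole `e^{iω(t-r)}/r` plus `κ` times the
incoming one `e^{iω(t+r-2R)}/r`. -/
noncomputable def dipole (ω R : ℝ) (κ : ℂ) (t r θ : ℝ) : ℂ :=
  -(Real.cos θ : ℂ) *
    ((I * ω / r + 1 / (r : ℂ) ^ 2) * exp (I * ω * ((t : ℂ) - r))
      + κ * (-(I * ω) / r + 1 / (r : ℂ) ^ 2) * exp (I * ω * ((t : ℂ) + r - 2 * R)))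

theorem sommerfeld_dipole {ω R : ℝ} (hR : R ≠ 0) (κ : ℂ) (t θ : ℝ) :
    deriv (fun s : ℝ => (R : ℂ) * dipole ω R κ s R θ) t
        + deriv (fun r : ℝ => (r : ℂ) * dipole ω R κ t r θ) R
      = -(Real.cos θ : ℂ) * exp (I * ω * (t - R)) / (R : ℂ) ^ 2
          * (κ * (2 * (ω : ℂ) ^ 2 * (R : ℂ) ^ 2 + 2 * I * ω * R - 1) - 1) := by
  set A : ℝ → ℂ := fun x => -(Real.cos θ : ℂ) * (I * ω + (x : ℂ)⁻¹)
  set B : ℝ → ℂ := fun x => -(Real.cos θ : ℂ) * κ * (-(I * ω) + (x : ℂ)⁻¹)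
  set g : ℝ → ℂ := fun u => exp (I * ω * u)
  set h : ℝ → ℂ := fun u => g (u - 2 * R)
  have hR' : (R : ℂ) ≠ 0 := by exact_mod_cast hR
  have hinv : HasDerivAt (fun x : ℝ => (x : ℂ)⁻¹) (-((R : ℂ) ^ 2)⁻¹) R :=
    (hasDerivAt_inv hR').comp_ofReal
  have hA := (hinv.const_add (I * ω)).const_mul (-(Real.cos θ : ℂ))
  have hB := (hinv.const_add (-(I * ω))).const_mul (-(Real.cos θ : ℂ) * κ)
  have htime : (fun s : ℝ => (R : ℂ) * dipole ω R κ s R θ)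
      = fun s => A R * g (s - R) + B R * h (s + R) := by
    funext s
    simp only [dipole, A, B, g, h]
    push_cast
    field_simp
    ring_nf
  have hradius : (fun r : ℝ => (r : ℂ) * dipole ω R κ t r θ)
      =ᶠ[𝓝 R] fun x => A x * g (t - x) + B x * h (t + x) := by
    filter_upwards [eventually_ne_nhds hR] with x hx
    have hx' : (x : ℂ) ≠ 0 := by exact_mod_cast hx
    simp only [dipole, A, B, g, h]
    push_cast
    field_simp
    ring_nf
  have hh := (hasDerivAt_cexp_I_mul ω (t + R - 2 * R)).comp_sub_const (t + R) (2 * R)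
  rw [htime, hradius.deriv_eq,
    deriv_add_deriv_outgoing_add_incoming hA hB (hasDerivAt_cexp_I_mul ω (t - R)) hh]
  push_cast
  have hphase : (t : ℂ) + R - 2 * R = t - R := by ring
  rw [hphase]
  field_simp
  ring_nf
  rw [I_sq]
  ring

theorem stmt10 (ω R : ℝ) (hω : ω ≠ 0) (hR : 0 < R) (κ : ℂ)
    (Φ : ℝ → ℝ → ℝ → ℂ)
    (hΦ : ∀ t r θ, Φ t r θ
      = -(Real.cos θ : ℂ) *
          ((Complex.I * ω / r + 1 / (r : ℂ) ^ 2)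
              * Complex.exp (Complex.I * ω * ((t : ℂ) - r))
            + κ * (-(Complex.I * ω) / r + 1 / (r : ℂ) ^ 2)
              * Complex.exp (Complex.I * ω * ((t : ℂ) + r - 2 * R))) ) :
    (∀ t θ : ℝ,
        deriv (fun s : ℝ => (R : ℂ) * Φ s R θ) t
          + deriv (fun r : ℝ => (r : ℂ) * Φ t r θ) R = 0)
      ↔ κ = 1 / (2 * (ω : ℂ) ^ 2 * (R : ℂ) ^ 2 + 2 * Complex.I * ω * R - 1) := by
  obtain rfl : Φ = dipole ω R κ := funext fun t => funext fun r => funext fun θ => hΦ t r θ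
  simp only [sommerfeld_dipole hR.ne']
  rw [eq_div_iff (reflection_denominator_ne_zero hω hR.ne')]
  constructor
  · intro h
    simpa [hR.ne', sub_eq_zero] using h R 0
  · intro h t θ
    rw [h, sub_self, mul_zero]
end
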